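/- Let T ∈ (0, ∞] and let (a,b,c) : [0,T) → ℝ³ be a differentiable solution of the gauged bracket Bach flow. Then for all t ∈ (0,T) one has a(t)² + b(t)² + c(t)² ≤ √6/√t. -/

import Mathlib

/-- First component of the right-hand side `F` of the gauged bracket Bach flow. -/
noncomputable def Fa (a b c : ℝ) : ℝ :=
  -(a / 48) * (44*a^4 + 72*a^2*b^2 - 5*a^2*c^2 + 28*b^4 + 24*b^2*c^2 - 4*c^4)

/-- Second component of the right-hand side `F` of the gauged bracket Bach flow. -/
noncomputable def Fb (a b c : ℝ) : ℝ :=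
  -(b / 48) * (60*a^4 + 104*a^2*b^2 + 57*a^2*c^2 + 44*b^4 + 104*b^2*c^2 + 60*c^4)

/-- Third component of the right-hand side `F` of the gauged bracket Bach flow. -/
noncomputable def Fc (a b c : ℝ) : ℝ :=
  -(c / 48) * (-4*a^4 + 24*a^2*b^2 - 5*a^2*c^2 + 28*b^4 + 72*b^2*c^2 + 44*c^4)

/-- `(a,b,c) : ℝ → ℝ³` is a differentiable solution of the gauged bracket Bach
flow on the set `S ⊆ ℝ`. -/
def IsBachFlowSolution (a b c : ℝ → ℝ) (S : Set ℝ) : Prop :=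
  ∀ t ∈ S,
    HasDerivAt a (Fa (a t) (b t) (c t)) t ∧
    HasDerivAt b (Fb (a t) (b t) (c t)) t ∧
    HasDerivAt c (Fc (a t) (b t) (c t)) t

/-!
The squared norm `u = a² + b² + c²` satisfies the differential inequality `u' ≤ -u³/12`:
this is the polynomial inequality `2⟨x, F x⟩ ≤ -|x|⁶/12` on `ℝ³`. While `u > 0` it
follows that `(u⁻²)' = -2u'/u³ ≥ 1/6`, so `u(t)⁻² ≥ u(0)⁻² + t/6 ≥ t/6`.
-/

open Set

theorem two_mul_inner_bachFlow_le (a b c : ℝ) :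
    2 * (a * Fa a b c) + 2 * (b * Fb a b c) + 2 * (c * Fc a b c) ≤
      -(a ^ 2 + b ^ 2 + c ^ 2) ^ 3 / 12 := by
  unfold Fa Fb Fc
  nlinarith [mul_nonneg (add_nonneg (sq_nonneg a) (sq_nonneg c)) (sq_nonneg (a ^ 2 - c ^ 2)),
    pow_nonneg (sq_nonneg a) 3, pow_nonneg (sq_nonneg b) 3, pow_nonneg (sq_nonneg c) 3,
    mul_nonneg (pow_nonneg (sq_nonneg a) 2) (sq_nonneg b),
    mul_nonneg (pow_nonneg (sq_nonneg b) 2) (sq_nonneg a),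
    mul_nonneg (pow_nonneg (sq_nonneg b) 2) (sq_nonneg c),
    mul_nonneg (pow_nonneg (sq_nonneg c) 2) (sq_nonneg b),
    sq_nonneg (a * b * c)]

theorem IsBachFlowSolution.hasDerivAt_normSq {a b c : ℝ → ℝ} {S : Set ℝ}
    (hsol : IsBachFlowSolution a b c S) {t : ℝ} (ht : t ∈ S) :
    HasDerivAt (fun s ↦ a s ^ 2 + b s ^ 2 + c s ^ 2)
      (2 * (a t * Fa (a t) (b t) (c t)) + 2 * (b t * Fb (a t) (b t) (c t)) +
        2 * (c t * Fc (a t) (b t) (c t))) t := by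
  obtain ⟨ha, hb, hc⟩ := hsol t ht
  exact (((ha.pow 2).add (hb.pow 2)).add (hc.pow 2)).congr_deriv (by push_cast; ring)

theorem monotoneOn_Icc_of_hasDerivAt_nonneg {f f' : ℝ → ℝ} {t₀ t₁ : ℝ}
    (hf : ∀ s ∈ Icc t₀ t₁, HasDerivAt f (f' s) s) (hf' : ∀ s ∈ Icc t₀ t₁, 0 ≤ f' s) :
    MonotoneOn f (Icc t₀ t₁) := by
  refine monotoneOn_of_hasDerivWithinAt_nonneg (f' := f') (convex_Icc t₀ t₁)
    (fun s hs ↦ (hf s hs).continuousAt.continuousWithinAt) (fun s hs ↦ ?_) (fun s hs ↦ ?_)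
  · rw [interior_Icc] at hs ⊢
    exact (hf s (Ioo_subset_Icc_self hs)).hasDerivWithinAt
  · rw [interior_Icc] at hs
    exact hf' s (Ioo_subset_Icc_self hs)

section CubicDecay

variable {u u' : ℝ → ℝ} {C t₀ t₁ : ℝ}

theorem pos_on_Icc_of_deriv_nonpos (hd : ∀ s ∈ Icc t₀ t₁, HasDerivAt u (u' s) s)
    (hle : ∀ s ∈ Icc t₀ t₁, u' s ≤ 0) (hpos : 0 < u t₁) : ∀ s ∈ Icc t₀ t₁, 0 < u s := by
  have hanti : MonotoneOn (fun s ↦ -u s) (Icc t₀ t₁) :=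
    monotoneOn_Icc_of_hasDerivAt_nonneg (fun s hs ↦ (hd s hs).neg)
      (fun s hs ↦ neg_nonneg.mpr (hle s hs))
  intro s hs
  have := hanti hs (right_mem_Icc.mpr (hs.1.trans hs.2)) hs.2
  simp only [neg_le_neg_iff] at this
  linarith

theorem inv_sq_add_le_inv_sq_of_deriv_le_neg_cube (hC : 0 < C) (h : t₀ ≤ t₁)
    (hd : ∀ s ∈ Icc t₀ t₁, HasDerivAt u (u' s) s)
    (hle : ∀ s ∈ Icc t₀ t₁, u' s ≤ -u s ^ 3 / C) (hpos : ∀ s ∈ Icc t₀ t₁, 0 < u s) :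
    (u t₀ ^ 2)⁻¹ + 2 * (t₁ - t₀) / C ≤ (u t₁ ^ 2)⁻¹ := by
  have hd' : ∀ s ∈ Icc t₀ t₁, HasDerivAt (fun s ↦ (u s ^ 2)⁻¹ - 2 * s / C)
      (-(2 * u s ^ 1 * u' s) / (u s ^ 2) ^ 2 - 2 / C) s := fun s hs ↦
    (((hd s hs).pow 2).inv (pow_pos (hpos s hs) 2).ne').sub
      (((hasDerivAt_id s).const_mul 2).div_const C |>.congr_deriv (by simp))
  have hmono := monotoneOn_Icc_of_hasDerivAt_nonneg hd' fun s hs ↦ by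
    have hus := hpos s hs
    have hslope : 2 / C ≤ -(2 * u s ^ 1 * u' s) / (u s ^ 2) ^ 2 := by
      calc 2 / C = 2 * u s * (u s ^ 3 / C) / (u s ^ 2) ^ 2 := by field_simp
        _ ≤ 2 * u s * -u' s / (u s ^ 2) ^ 2 := by
          have := hle s hs
          rw [neg_div] at this
          gcongr
          linarith
        _ = -(2 * u s ^ 1 * u' s) / (u s ^ 2) ^ 2 := by ring
    linarith
  have hends := hmono (left_mem_Icc.mpr h) (right_mem_Icc.mpr h) h
  simp only at hends
  linarith [show 2 * (t₁ - t₀) / C = 2 * t₁ / C - 2 * t₀ / C by ring]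

theorem sq_le_of_deriv_le_neg_cube (hC : 0 < C) (ht : 0 < t₁)
    (hu : ∀ s ∈ Icc 0 t₁, 0 ≤ u s) (hd : ∀ s ∈ Icc 0 t₁, HasDerivAt u (u' s) s)
    (hle : ∀ s ∈ Icc 0 t₁, u' s ≤ -u s ^ 3 / C) : u t₁ ^ 2 ≤ C / (2 * t₁) := by
  have ht₁ : t₁ ∈ Icc 0 t₁ := right_mem_Icc.mpr ht.le
  rcases (hu t₁ ht₁).eq_or_lt with hzero | hpos
  · rw [← hzero, zero_pow two_ne_zero]
    positivity
  have hdecr : ∀ s ∈ Icc 0 t₁, u' s ≤ 0 := fun s hs ↦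
    (hle s hs).trans (div_nonpos_of_nonpos_of_nonneg (neg_nonpos.mpr (pow_nonneg (hu s hs) 3))
      hC.le)
  have key := inv_sq_add_le_inv_sq_of_deriv_le_neg_cube hC ht.le hd hle
    (pos_on_Icc_of_deriv_nonpos hd hdecr hpos)
  have hinv : 2 * t₁ / C ≤ (u t₁ ^ 2)⁻¹ := by
    have : 0 ≤ (u 0 ^ 2)⁻¹ := by positivity
    rw [sub_zero] at key
    linarith
  rwa [le_inv_comm₀ (by positivity) (by positivity), inv_div] at hinv

end CubicDecay

theorem norm_sq_decay_general (T : EReal) (a b c : ℝ → ℝ)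
    (hsol : IsBachFlowSolution a b c {t : ℝ | 0 ≤ t ∧ (t : EReal) < T}) :
    ∀ t : ℝ, 0 < t → (t : EReal) < T →
      a t ^ 2 + b t ^ 2 + c t ^ 2 ≤ Real.sqrt 6 / Real.sqrt t := by
  intro t ht htT
  have hIcc : Icc 0 t ⊆ {t : ℝ | 0 ≤ t ∧ (t : EReal) < T} := fun s hs ↦
    ⟨hs.1, (EReal.coe_le_coe_iff.mpr hs.2).trans_lt htT⟩
  have hsq : (a t ^ 2 + b t ^ 2 + c t ^ 2) ^ 2 ≤ 12 / (2 * t) :=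
    sq_le_of_deriv_le_neg_cube (u := fun s ↦ a s ^ 2 + b s ^ 2 + c s ^ 2) (by norm_num) ht
      (fun s _ ↦ by positivity) (fun s hs ↦ hsol.hasDerivAt_normSq (hIcc hs))
      (fun s _ ↦ two_mul_inner_bachFlow_le _ _ _)
  calc a t ^ 2 + b t ^ 2 + c t ^ 2 ≤ Real.sqrt (6 / t) := by
        rw [Real.le_sqrt (by positivity) (by positivity)]
        convert hsq using 1
        field_simp
        norm_num
    _ = Real.sqrt 6 / Real.sqrt t := Real.sqrt_div (by norm_num) t

/-- along a solution of the gauged bracket Bach flow on `[0,T)`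
(with `T ∈ (0,∞]`), one has `a(t)² + b(t)² + c(t)² ≤ √6/√t` for all `t ∈ (0,T)`. -/
theorem norm_sq_decay (T : EReal) (hT : 0 < T) (a b c : ℝ → ℝ)
    (hsol : IsBachFlowSolution a b c {t : ℝ | 0 ≤ t ∧ (t : EReal) < T}) :
    ∀ t : ℝ, 0 < t → (t : EReal) < T →
      a t ^ 2 + b t ^ 2 + c t ^ 2 ≤ Real.sqrt 6 / Real.sqrt t :=
  norm_sq_decay_general T a b c hsol
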